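/- Let f be a three times continuously differentiable probability density on ℝ with compact support [a,b], positive on (a,b), whose critical points in (a,b) are finitely many and all nondegenerate; denote its local minima in (a,b) by m_1, …, m_{r−1} and its local maxima in (a,b) by M_1, …, M_r. Let K ⊂ (a,b) be a compact set containing all these critical points in its interior, and let (g_n) be twice continuously differentiable functions on ℝ with g_n' → f' and g_n'' → f'' uniformly. Then there exist ε > 0 and n_0 ∈ ℕ such that for every n ≥ n_0: (i) for each j, g_n'' > 0 on [m_j − ε, m_j + ε] and g_n has exactly one critical point in [m_j − ε, m_j + ε], which is a local minimum; (ii) for each k, g_n'' < 0 on [M_k − ε, M_k + ε] and g_n has exactly one critical point in [M_k − ε, M_k + ε], which is a local maximum; and (iii) g_n has no critical points in K outside the union of these intervals. -/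

import Mathlib

/-!
Near a nondegenerate minimum `c` of `f` there is an interval `[c - ε, c + ε]` on which `f'' > 0`,
so `f'` is negative at `c - ε` and positive at `c + ε`. Uniform convergence carries both facts
over to `gₙ` for large `n`; then `gₙ'` is strictly increasing on the interval and changes sign,
so it has exactly one zero there, a local minimum by the second derivative test. Maxima are
minima of `-f`. By the second derivative test every critical point of `f` in `(a, b)` is one of
the `mⱼ` or `Mₖ`, so `|f'|` is bounded below on the compact set left from `K` after removing
the intervals, and hence so is `|gₙ'|` for large `n`.
-/

open Filter Set Topology

section UniformLimits

variable {α ι : Type*} [TopologicalSpace α] {l : Filter ι} {F : ι → α → ℝ}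
  {f : α → ℝ} {K : Set α}

theorem TendstoUniformlyOn.eventually_forall_pos (hF : TendstoUniformlyOn F f l K)
    (hK : IsCompact K) (hf : ContinuousOn f K) (hpos : ∀ x ∈ K, 0 < f x) :
    ∀ᶠ n in l, ∀ x ∈ K, 0 < F n x := by
  obtain ⟨δ, hδ, hδf⟩ := hK.exists_forall_le' hf hpos
  filter_upwards [Metric.tendstoUniformlyOn_iff.1 hF δ hδ] with n hn x hx
  have hclose := (abs_sub_lt_iff.1 (hn x hx)).1
  linarith [hδf x hx]

theorem TendstoUniformlyOn.eventually_forall_ne_zero (hF : TendstoUniformlyOn F f l K)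
    (hK : IsCompact K) (hf : ContinuousOn f K) (hne : ∀ x ∈ K, f x ≠ 0) :
    ∀ᶠ n in l, ∀ x ∈ K, F n x ≠ 0 := by
  filter_upwards [(uniformContinuous_norm.comp_tendstoUniformlyOn hF).eventually_forall_pos hK
    hf.norm fun x hx => norm_pos_iff.2 (hne x hx)] with n hn x hx
  exact norm_pos_iff.1 (hn x hx)

end UniformLimits

theorem eventually_Icc_subset_of_mem_nhds {U : Set ℝ} {c : ℝ} (hU : U ∈ 𝓝 c) :
    ∀ᶠ ε in 𝓝[>] 0, Icc (c - ε) (c + ε) ⊆ U := by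
  obtain ⟨ρ, hρ, hball⟩ := Metric.mem_nhds_iff.1 hU
  filter_upwards [Ioo_mem_nhdsGT hρ] with ε hε
  rw [← Real.closedBall_eq_Icc]
  exact (Metric.closedBall_subset_ball hε.2).trans hball

section SecondDerivative

variable {h : ℝ → ℝ} {x : ℝ}

theorem deriv_deriv_eq_zero_of_isLocalMin_of_isLocalMax (hmin : IsLocalMin h x)
    (hmax : IsLocalMax h x) : deriv (deriv h) x = 0 := by
  have hconst : h =ᶠ[𝓝 x] fun _ => h x := by
    filter_upwards [hmin, hmax] with y hy₁ hy₂
    exact le_antisymm hy₂ hy₁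
  have hderiv : deriv h =ᶠ[𝓝 x] fun _ => 0 := by
    filter_upwards [hconst.eventuallyEq_nhds] with y hy
    simpa using hy.deriv_eq
  simpa using hderiv.deriv_eq

theorem IsLocalMin.deriv_deriv_pos (hmin : IsLocalMin h x) (hc : ContinuousAt h x)
    (hnd : deriv (deriv h) x ≠ 0) : 0 < deriv (deriv h) x :=
  hnd.lt_or_gt.resolve_left fun hneg => hnd <| deriv_deriv_eq_zero_of_isLocalMin_of_isLocalMax
    hmin (isLocalMax_of_deriv_deriv_neg hneg hmin.deriv_eq_zero hc)

theorem IsLocalMax.deriv_deriv_neg (hmax : IsLocalMax h x) (hc : ContinuousAt h x)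
    (hnd : deriv (deriv h) x ≠ 0) : deriv (deriv h) x < 0 :=
  hnd.lt_or_gt.resolve_right fun hpos => hnd <| deriv_deriv_eq_zero_of_isLocalMin_of_isLocalMax
    (isLocalMin_of_deriv_deriv_pos hpos hmax.deriv_eq_zero hc) hmax

theorem isLocalMin_or_isLocalMax_of_deriv_deriv_ne_zero (hc : ContinuousAt h x)
    (h0 : deriv h x = 0) (hnd : deriv (deriv h) x ≠ 0) : IsLocalMin h x ∨ IsLocalMax h x :=
  hnd.lt_or_gt.symm.imp (isLocalMin_of_deriv_deriv_pos · h0 hc)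
    (isLocalMax_of_deriv_deriv_neg · h0 hc)

theorem exists_unique_critical_isLocalMin_of_deriv_deriv_pos {u v : ℝ} (huv : u ≤ v)
    (hd : Differentiable ℝ h) (hc : ContinuousOn (deriv h) (Icc u v))
    (hpos : ∀ x ∈ Icc u v, 0 < deriv (deriv h) x) (hu : deriv h u < 0) (hv : 0 < deriv h v) :
    ∃ x ∈ Icc u v, deriv h x = 0 ∧ IsLocalMin h x ∧
      ∀ y ∈ Icc u v, deriv h y = 0 → y = x := by
  have hmono : StrictMonoOn (deriv h) (Icc u v) :=
    strictMonoOn_of_deriv_pos (convex_Icc u v) hc fun y hy => hpos y (interior_subset hy)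
  obtain ⟨x, hx, hx0⟩ := intermediate_value_Icc huv hc ⟨hu.le, hv.le⟩
  exact ⟨x, hx, hx0, isLocalMin_of_deriv_deriv_pos (hpos x hx) hx0 (hd x).continuousAt,
    fun y hy hy0 => hmono.injOn hy hx (hy0.trans hx0.symm)⟩

end SecondDerivative

section Localization

variable {ι : Type*} {l : Filter ι} {f : ℝ → ℝ} {g : ι → ℝ → ℝ} {c : ℝ}

theorem eventually_unique_critical_isLocalMin_near (hf : ContDiff ℝ 2 f)
    (hc : deriv f c = 0) (hc₂ : 0 < deriv (deriv f) c) (hg : ∀ n, ContDiff ℝ 2 (g n))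
    (hg₁ : ∀ x, Tendsto (fun n => deriv (g n) x) l (𝓝 (deriv f x)))
    (hg₂ : TendstoLocallyUniformly (fun n => deriv (deriv (g n))) (deriv (deriv f)) l) :
    ∀ᶠ ε in 𝓝[>] 0, ∀ᶠ n in l,
      (∀ x ∈ Icc (c - ε) (c + ε), 0 < deriv (deriv (g n)) x) ∧
      ∃ x ∈ Icc (c - ε) (c + ε), deriv (g n) x = 0 ∧ IsLocalMin (g n) x ∧
        ∀ y ∈ Icc (c - ε) (c + ε), deriv (g n) y = 0 → y = x := by
  have hf₂ : Continuous (deriv (deriv f)) := (hf.iterate_deriv' 0 2).continuous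
  filter_upwards [eventually_Icc_subset_of_mem_nhds
      ((isOpen_lt continuous_const hf₂).mem_nhds hc₂), self_mem_nhdsWithin]
    with ε hsub (hε : 0 < ε)
  have hmono : StrictMonoOn (deriv f) (Icc (c - ε) (c + ε)) :=
    strictMonoOn_of_deriv_pos (convex_Icc _ _) (hf.continuous_deriv one_le_two).continuousOn
      fun x hx => hsub (interior_subset hx)
  have hcI : c ∈ Icc (c - ε) (c + ε) := ⟨by linarith, by linarith⟩
  have hleft : deriv f (c - ε) < 0 :=
    hc ▸ hmono (left_mem_Icc.2 (by linarith)) hcI (by linarith)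
  have hright : 0 < deriv f (c + ε) :=
    hc ▸ hmono hcI (right_mem_Icc.2 (by linarith)) (by linarith)
  filter_upwards [(tendstoLocallyUniformly_iff_forall_isCompact.1 hg₂ _
      isCompact_Icc).eventually_forall_pos isCompact_Icc hf₂.continuousOn hsub,
    (hg₁ _).eventually_lt_const hleft, (hg₁ _).eventually_const_lt hright] with n hpos hu hv
  exact ⟨hpos, exists_unique_critical_isLocalMin_of_deriv_deriv_pos (by linarith)
    ((hg n).differentiable two_ne_zero) ((hg n).continuous_deriv one_le_two).continuousOn
    hpos hu hv⟩

theorem eventually_unique_critical_isLocalMax_near (hf : ContDiff ℝ 2 f)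
    (hc : deriv f c = 0) (hc₂ : deriv (deriv f) c < 0) (hg : ∀ n, ContDiff ℝ 2 (g n))
    (hg₁ : ∀ x, Tendsto (fun n => deriv (g n) x) l (𝓝 (deriv f x)))
    (hg₂ : TendstoLocallyUniformly (fun n => deriv (deriv (g n))) (deriv (deriv f)) l) :
    ∀ᶠ ε in 𝓝[>] 0, ∀ᶠ n in l,
      (∀ x ∈ Icc (c - ε) (c + ε), deriv (deriv (g n)) x < 0) ∧
      ∃ x ∈ Icc (c - ε) (c + ε), deriv (g n) x = 0 ∧ IsLocalMax (g n) x ∧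
        ∀ y ∈ Icc (c - ε) (c + ε), deriv (g n) y = 0 → y = x := by
  have := eventually_unique_critical_isLocalMin_near (f := -f) (g := fun n => -g n) hf.neg
    (by simpa [deriv.neg'] using hc) (by simpa [deriv.neg'] using hc₂) (fun n => (hg n).neg)
    (fun x => by simpa [deriv.neg'] using (hg₁ x).neg)
    (by simpa [deriv.neg', Pi.neg_def] using hg₂.neg)
  filter_upwards [this] with ε hε
  filter_upwards [hε] with n ⟨hpos, x, hx, hx0, hmin, huniq⟩
  refine ⟨fun y hy => by simpa [deriv.neg'] using hpos y hy, x, hx,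
    by simpa [deriv.neg'] using hx0, by simpa using hmin.neg,
    fun y hy hy0 => huniq y hy (by simp [deriv.neg', hy0])⟩

end Localization

theorem critical_points_of_estimators_localize_general
    (f : ℝ → ℝ) (hf : ContDiff ℝ 3 f)
    (a b : ℝ)
    (hnondeg : ∀ x ∈ Set.Ioo a b, deriv f x = 0 → deriv (deriv f) x ≠ 0)
    (r : ℕ)
    (m : Fin (r - 1) → ℝ)
    (hm_min : {x | x ∈ Set.Ioo a b ∧ IsLocalMin f x} = Set.range m)
    (M : Fin r → ℝ)
    (hM_max : {x | x ∈ Set.Ioo a b ∧ IsLocalMax f x} = Set.range M)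
    (K : Set ℝ) (hK : IsCompact K) (hK_sub : K ⊆ Set.Ioo a b)
    (g : ℕ → ℝ → ℝ) (hg : ∀ n, ContDiff ℝ 2 (g n))
    (hg1 : TendstoUniformly (fun n => deriv (g n)) (deriv f) atTop)
    (hg2 : TendstoUniformly (fun n => deriv (deriv (g n))) (deriv (deriv f)) atTop) :
    ∃ ε > 0, ∃ n₀ : ℕ, ∀ n ≥ n₀,
      (∀ j : Fin (r - 1),
        (∀ x ∈ Set.Icc (m j - ε) (m j + ε), 0 < deriv (deriv (g n)) x) ∧
        (∃ x ∈ Set.Icc (m j - ε) (m j + ε), deriv (g n) x = 0 ∧ IsLocalMin (g n) x ∧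
          ∀ y ∈ Set.Icc (m j - ε) (m j + ε), deriv (g n) y = 0 → y = x)) ∧
      (∀ k : Fin r,
        (∀ x ∈ Set.Icc (M k - ε) (M k + ε), deriv (deriv (g n)) x < 0) ∧
        (∃ x ∈ Set.Icc (M k - ε) (M k + ε), deriv (g n) x = 0 ∧ IsLocalMax (g n) x ∧
          ∀ y ∈ Set.Icc (M k - ε) (M k + ε), deriv (g n) y = 0 → y = x)) ∧
      (∀ x ∈ K, (∀ j : Fin (r - 1), x ∉ Set.Icc (m j - ε) (m j + ε)) →
        (∀ k : Fin r, x ∉ Set.Icc (M k - ε) (M k + ε)) → deriv (g n) x ≠ 0) := by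
  have hf₂ : ContDiff ℝ 2 f := hf.of_le (by norm_num)
  have hfc : ∀ x, ContinuousAt f x := fun _ => hf.continuous.continuousAt
  have hm_loc : ∀ j, m j ∈ Ioo a b ∧ IsLocalMin f (m j) := fun j =>
    (hm_min.symm ▸ mem_range_self j : m j ∈ {x | x ∈ Ioo a b ∧ IsLocalMin f x})
  have hM_loc : ∀ k, M k ∈ Ioo a b ∧ IsLocalMax f (M k) := fun k =>
    (hM_max.symm ▸ mem_range_self k : M k ∈ {x | x ∈ Ioo a b ∧ IsLocalMax f x})
  have hmin_near := fun j => have ⟨hmem, hmin⟩ := hm_loc j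
    eventually_unique_critical_isLocalMin_near hf₂ hmin.deriv_eq_zero
      (hmin.deriv_deriv_pos (hfc _) (hnondeg _ hmem hmin.deriv_eq_zero))
      hg hg1.tendsto_at hg2.tendstoLocallyUniformly
  have hmax_near := fun k => have ⟨hmem, hmax⟩ := hM_loc k
    eventually_unique_critical_isLocalMax_near hf₂ hmax.deriv_eq_zero
      (hmax.deriv_deriv_neg (hfc _) (hnondeg _ hmem hmax.deriv_eq_zero))
      hg hg1.tendsto_at hg2.tendstoLocallyUniformly
  obtain ⟨ε, ⟨hεm, hεM⟩, hε : 0 < ε⟩ := (((eventually_all.2 hmin_near).and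
    (eventually_all.2 hmax_near)).and self_mem_nhdsWithin).exists
  have hcrit : ∀ x ∈ Ioo a b, deriv f x = 0 → x ∈ range m ∪ range M := fun x hx hx0 =>
    (isLocalMin_or_isLocalMax_of_deriv_deriv_ne_zero (hfc x) hx0 (hnondeg x hx hx0)).imp
      (fun hmin => hm_min ▸ ⟨hx, hmin⟩) (fun hmax => hM_max ▸ ⟨hx, hmax⟩)
  set U := (⋃ j, Ioo (m j - ε) (m j + ε)) ∪ ⋃ k, Ioo (M k - ε) (M k + ε)
  have hU : IsOpen U :=
    (isOpen_iUnion fun _ => isOpen_Ioo).union (isOpen_iUnion fun _ => isOpen_Ioo)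
  have hKU : ∀ x ∈ K \ U, deriv f x ≠ 0 := by
    rintro x ⟨hxK, hxU⟩ hx0
    rcases hcrit x (hK_sub hxK) hx0 with ⟨j, rfl⟩ | ⟨k, rfl⟩
    · exact hxU (Or.inl (mem_iUnion_of_mem j ⟨by linarith, by linarith⟩))
    · exact hxU (Or.inr (mem_iUnion_of_mem k ⟨by linarith, by linarith⟩))
  have hout := hg1.tendstoUniformlyOn.eventually_forall_ne_zero (hK.diff hU)
    (hf₂.continuous_deriv one_le_two).continuousOn hKU
  obtain ⟨n₀, hn₀⟩ := eventually_atTop.1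
    ((eventually_all.2 hεm).and ((eventually_all.2 hεM).and hout))
  refine ⟨ε, hε, n₀, fun n hn => ⟨(hn₀ n hn).1, (hn₀ n hn).2.1,
    fun x hxK hxm hxM => (hn₀ n hn).2.2 x ⟨hxK, ?_⟩⟩⟩
  simp only [U, mem_union, mem_iUnion, not_or, not_exists]
  exact ⟨fun j hj => hxm j (Ioo_subset_Icc_self hj), fun k hk => hxM k (Ioo_subset_Icc_self hk)⟩

/-- Localization of critical points of the estimators: if `f` is a `C³` probability density
with compact support `[a,b]`, positive on `(a,b)`, with finitely many nondegenerate critical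
points, local minima `m₁, …, m_{r-1}` and local maxima `M₁, …, M_r` in `(a,b)`, `K ⊆ (a,b)`
is compact and contains all critical points of `f` in its interior, and `gₙ` are `C²` with
`gₙ' → f'`, `gₙ'' → f''` uniformly, then there are `ε > 0` and `n₀` such that for `n ≥ n₀`:
(i) on each `[mⱼ - ε, mⱼ + ε]`, `gₙ'' > 0` and `gₙ` has exactly one critical point, a local
minimum; (ii) on each `[Mₖ - ε, Mₖ + ε]`, `gₙ'' < 0` and `gₙ` has exactly one critical point,
a local maximum; (iii) `gₙ` has no critical point in `K` outside these intervals. -/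
theorem critical_points_of_estimators_localize
    (f : ℝ → ℝ) (hf : ContDiff ℝ 3 f)
    (a b : ℝ) (hab : a < b)
    (hf_nonneg : ∀ x, 0 ≤ f x)
    (hf_int : ∫ x, f x = 1)
    (hf_supp : tsupport f = Set.Icc a b)
    (hf_pos : ∀ x ∈ Set.Ioo a b, 0 < f x)
    (hcrit_fin : {x | x ∈ Set.Ioo a b ∧ deriv f x = 0}.Finite)
    (hnondeg : ∀ x ∈ Set.Ioo a b, deriv f x = 0 → deriv (deriv f) x ≠ 0)
    (r : ℕ) (hr : 1 ≤ r)
    (m : Fin (r - 1) → ℝ) (hm_mono : StrictMono m)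
    (hm_mem : ∀ j, m j ∈ Set.Ioo a b)
    (hm_min : {x | x ∈ Set.Ioo a b ∧ IsLocalMin f x} = Set.range m)
    (M : Fin r → ℝ) (hM_mono : StrictMono M)
    (hM_mem : ∀ k, M k ∈ Set.Ioo a b)
    (hM_max : {x | x ∈ Set.Ioo a b ∧ IsLocalMax f x} = Set.range M)
    (K : Set ℝ) (hK : IsCompact K) (hK_sub : K ⊆ Set.Ioo a b)
    (hK_crit : {x | x ∈ Set.Ioo a b ∧ deriv f x = 0} ⊆ interior K)
    (g : ℕ → ℝ → ℝ) (hg : ∀ n, ContDiff ℝ 2 (g n))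
    (hg1 : TendstoUniformly (fun n => deriv (g n)) (deriv f) atTop)
    (hg2 : TendstoUniformly (fun n => deriv (deriv (g n))) (deriv (deriv f)) atTop) :
    ∃ ε > 0, ∃ n₀ : ℕ, ∀ n ≥ n₀,
      (∀ j : Fin (r - 1),
        (∀ x ∈ Set.Icc (m j - ε) (m j + ε), 0 < deriv (deriv (g n)) x) ∧
        (∃ x ∈ Set.Icc (m j - ε) (m j + ε), deriv (g n) x = 0 ∧ IsLocalMin (g n) x ∧
          ∀ y ∈ Set.Icc (m j - ε) (m j + ε), deriv (g n) y = 0 → y = x)) ∧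
      (∀ k : Fin r,
        (∀ x ∈ Set.Icc (M k - ε) (M k + ε), deriv (deriv (g n)) x < 0) ∧
        (∃ x ∈ Set.Icc (M k - ε) (M k + ε), deriv (g n) x = 0 ∧ IsLocalMax (g n) x ∧
          ∀ y ∈ Set.Icc (M k - ε) (M k + ε), deriv (g n) y = 0 → y = x)) ∧
      (∀ x ∈ K, (∀ j : Fin (r - 1), x ∉ Set.Icc (m j - ε) (m j + ε)) →
        (∀ k : Fin r, x ∉ Set.Icc (M k - ε) (M k + ε)) → deriv (g n) x ≠ 0) :=
  critical_points_of_estimators_localize_general f hf a b hnondeg r m hm_min M hM_max K hK hK_sub g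
    hg hg1 hg2
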